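/- (Mean-zero off-diagonal kernel estimate with maximal function control.) Let n ≥ 1, η > 0, and let K : ℝⁿ × ℝⁿ → ℂ satisfy the smoothness bound |K(x,y) − K(x',y)| ≤ |x−x'|^η / |x−y|^{n+η} whenever |x−x'| < |x−y|/2 (supremum-norm distances). Let Q be a cube with center x_Q and side length ℓQ, let D ≥ 2 ℓQ, and let E ⊆ ℝⁿ be measurable with |y − x_Q| ≥ D for all y ∈ E. Let φ₁ ∈ L¹_loc(ℝⁿ) be supported in E with Mφ₁(x) < ∞ for x ∈ Q, and let φ₂ ∈ L¹(ℝⁿ) be supported in Q with ∫ φ₂ dx = 0. Then | ∫_Q ∫_E K(x,y) φ₁(y) φ₂(x) dy dx | ≤ C(n, η) (ℓQ)^η D^{−η} ∫_Q Mφ₁(x) |φ₂(x)| dx. -/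

import Mathlib

open MeasureTheory
open scoped ENNReal NNReal

noncomputable section

/-- An axis-parallel cube in `ℝⁿ`, given by its lower corner and (positive) side length. -/
structure Cube (n : ℕ) where
  c : Fin n → ℝ
  l : ℝ
  l_pos : 0 < l

/-- The set of points of a cube. -/
def Cube.set {n : ℕ} (Q : Cube n) : Set (Fin n → ℝ) :=
  Set.Icc Q.c (fun i => Q.c i + Q.l)

/-- The center of a cube. -/
def Cube.center {n : ℕ} (Q : Cube n) : Fin n → ℝ :=
  fun i => Q.c i + Q.l / 2

/-- The Hardy–Littlewood maximal function (over all axis-parallel cubes containing `x`),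
with values in `ℝ≥0∞`. -/
def maximalFn {n : ℕ} (f : (Fin n → ℝ) → ℂ) (x : Fin n → ℝ) : ℝ≥0∞ :=
  ⨆ (Q : Cube n) (_ : x ∈ Q.set), (∫⁻ y in Q.set, (‖f y‖₊ : ℝ≥0∞) ∂volume) / volume Q.set

namespace MeanzeroAux

variable {n : ℕ}

lemma cube_volume (R : Cube n) : volume R.set = ENNReal.ofReal R.l ^ n := by
  rw [Cube.set, Real.volume_Icc_pi]
  simp [Finset.prod_const]

/-- The cube that is the closed sup-norm ball of radius `r` around `z`. -/
def ballCube (z : Fin n → ℝ) (r : ℝ) (hr : 0 < r) : Cube n :=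
  ⟨fun i => z i - r, 2 * r, by linarith⟩

lemma mem_ballCube {z x : Fin n → ℝ} {r : ℝ} (hr : 0 < r) :
    x ∈ (ballCube z r hr).set ↔ dist x z ≤ r := by
  simp only [Cube.set, ballCube, Set.mem_Icc, Pi.le_def]
  constructor
  · rintro ⟨h1, h2⟩
    rw [dist_pi_le_iff hr.le]
    intro i
    have ha := h1 i; have hb := h2 i
    rw [Real.dist_eq, abs_le]
    constructor <;> linarith
  · intro h
    have h' : ∀ i, |x i - z i| ≤ r := fun i => by
      have := (dist_pi_le_iff hr.le).1 h i
      rwa [Real.dist_eq] at this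
    exact ⟨fun i => by have := (abs_le.1 (h' i)).1; linarith,
           fun i => by have := (abs_le.1 (h' i)).2; linarith⟩

lemma maximal_ball (f : (Fin n → ℝ) → ℂ) (x z : Fin n → ℝ) {r : ℝ} (hr : 0 < r)
    (hx : dist x z ≤ r) :
    ∫⁻ y in {y | dist y z ≤ r}, (‖f y‖₊ : ℝ≥0∞) ∂volume
      ≤ maximalFn f x * ENNReal.ofReal (2 * r) ^ n := by
  set R := ballCube z r hr with hR
  have hsub : {y | dist y z ≤ r} ⊆ R.set := fun y hy => (mem_ballCube hr).2 hy
  have hvol : volume R.set = ENNReal.ofReal (2 * r) ^ n := cube_volume R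
  have hv0 : volume R.set ≠ 0 := by
    rw [hvol]
    exact pow_ne_zero _ (ne_of_gt (ENNReal.ofReal_pos.2 (by linarith)))
  have hvt : volume R.set ≠ ⊤ := by
    rw [hvol]; exact ENNReal.pow_ne_top ENNReal.ofReal_ne_top
  have h2 : (∫⁻ y in R.set, (‖f y‖₊ : ℝ≥0∞) ∂volume) / volume R.set ≤ maximalFn f x :=
    le_iSup₂ (f := fun (Q : Cube n) (_ : x ∈ Q.set) =>
      (∫⁻ y in Q.set, (‖f y‖₊ : ℝ≥0∞) ∂volume) / volume Q.set) R ((mem_ballCube hr).2 hx)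
  have h3 : ∫⁻ y in R.set, (‖f y‖₊ : ℝ≥0∞) ∂volume ≤ maximalFn f x * volume R.set :=
    (ENNReal.div_le_iff hv0 hvt).1 h2
  calc ∫⁻ y in {y | dist y z ≤ r}, (‖f y‖₊ : ℝ≥0∞) ∂volume
      ≤ ∫⁻ y in R.set, (‖f y‖₊ : ℝ≥0∞) ∂volume := lintegral_mono_set hsub
    _ ≤ maximalFn f x * volume R.set := h3
    _ = maximalFn f x * ENNReal.ofReal (2 * r) ^ n := by rw [hvol]

lemma exists_dyadic {t : ℝ} (ht : 1 ≤ t) : ∃ k : ℕ, (2:ℝ)^k ≤ t ∧ t < 2^(k+1) := by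
  have hfl : 1 ≤ ⌊t⌋₊ := Nat.le_floor (by exact_mod_cast ht)
  refine ⟨Nat.log 2 ⌊t⌋₊, ?_, ?_⟩
  · calc (2:ℝ) ^ Nat.log 2 ⌊t⌋₊ = ((2 ^ Nat.log 2 ⌊t⌋₊ : ℕ) : ℝ) := by push_cast; ring
      _ ≤ (⌊t⌋₊ : ℝ) := Nat.cast_le.2 (Nat.pow_log_le_self 2 (by omega))
      _ ≤ t := Nat.floor_le (by linarith)
  · have h2 : ⌊t⌋₊ < 2 ^ (Nat.log 2 ⌊t⌋₊ + 1) := Nat.lt_pow_succ_log_self (by norm_num) _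
    have h3 : t < (⌊t⌋₊ : ℝ) + 1 := Nat.lt_floor_add_one t
    have h4 : ((⌊t⌋₊ : ℝ)) + 1 ≤ ((2 ^ (Nat.log 2 ⌊t⌋₊ + 1) : ℕ) : ℝ) := by
      exact_mod_cast Nat.succ_le_of_lt h2
    calc t < (⌊t⌋₊ : ℝ) + 1 := h3
      _ ≤ ((2 ^ (Nat.log 2 ⌊t⌋₊ + 1) : ℕ) : ℝ) := h4
      _ = (2:ℝ) ^ (Nat.log 2 ⌊t⌋₊ + 1) := by push_cast; ring

lemma ck_eq (n k : ℕ) {η D : ℝ} (hD : 0 < D) :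
    ((2:ℝ)^k * D) ^ (-((n:ℝ) + η)) * ((2:ℝ)^(k+2) * D) ^ n
      = 4^n * D^(-η) * ((2:ℝ)^(-η))^k := by
  have h2 : (0:ℝ) ≤ 2 := by norm_num
  have e1 : ((2:ℝ)^k * D) ^ (-((n:ℝ) + η))
      = (2:ℝ) ^ ((k:ℝ) * (-((n:ℝ)+η))) * D ^ (-((n:ℝ)+η)) := by
    rw [Real.mul_rpow (by positivity) hD.le, ← Real.rpow_natCast 2 k, ← Real.rpow_mul h2]
  have e2 : ((2:ℝ)^(k+2) * D) ^ n = (2:ℝ) ^ (((k:ℝ)+2) * (n:ℝ)) * D ^ (n:ℝ) := by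
    rw [mul_pow, ← Real.rpow_natCast ((2:ℝ)^(k+2)) n, ← Real.rpow_natCast 2 (k+2),
        ← Real.rpow_mul h2, ← Real.rpow_natCast D n]
    push_cast; ring_nf
  have e3 : ((4:ℝ))^n = (2:ℝ) ^ (2*(n:ℝ)) := by
    rw [show (4:ℝ) = 2 ^ (2:ℝ) by
          rw [show (2:ℝ) = ((2:ℕ):ℝ) by norm_num, Real.rpow_natCast]; norm_num,
        ← Real.rpow_natCast ((2:ℝ)^(2:ℝ)) n, ← Real.rpow_mul h2]
  have e4 : ((2:ℝ)^(-η))^k = (2:ℝ) ^ (-η * (k:ℝ)) := by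
    rw [← Real.rpow_natCast ((2:ℝ)^(-η)) k, ← Real.rpow_mul h2]
  rw [e1, e2, e3, e4, mul_mul_mul_comm, ← Real.rpow_add (by norm_num : (0:ℝ) < 2),
      ← Real.rpow_add hD, mul_right_comm, ← Real.rpow_add (by norm_num : (0:ℝ) < 2)]
  congr 1
  · congr 1; ring
  · congr 1; ring

/-- The annuli decomposition estimate. -/
lemma annuli_bound {η : ℝ} (hη : 0 < η) (φ₁ : (Fin n → ℝ) → ℂ) (z x : Fin n → ℝ)
    {D : ℝ} (hD : 0 < D) (hx : dist x z ≤ D / 2)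
    (E : Set (Fin n → ℝ)) (hE : ∀ y ∈ E, D ≤ dist y z) :
    ∫⁻ y in E, ENNReal.ofReal (dist y z ^ (-((n:ℝ) + η))) * (‖φ₁ y‖₊ : ℝ≥0∞) ∂volume ≤
      ENNReal.ofReal (4^n * (1 - 2^(-η))⁻¹ * D^(-η)) * maximalFn φ₁ x := by
  set M := maximalFn φ₁ x with hM
  set A : ℕ → Set (Fin n → ℝ) :=
    fun k => {y | (2:ℝ)^k * D ≤ dist y z ∧ dist y z < 2^(k+1) * D} with hA
  have hdm : Measurable (fun y : Fin n → ℝ => dist y z) :=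
    (continuous_id.dist continuous_const).measurable
  have hAm : ∀ k, MeasurableSet (A k) := by
    intro k
    have : A k = (fun y => dist y z) ⁻¹' (Set.Ico ((2:ℝ)^k * D) (2^(k+1) * D)) := rfl
    rw [this]
    exact hdm measurableSet_Ico
  have hEsub : E ⊆ ⋃ k, A k := by
    intro y hy
    have hd := hE y hy
    have ht : 1 ≤ dist y z / D := (one_le_div hD).2 hd
    obtain ⟨k, h1, h2⟩ := exists_dyadic ht
    exact Set.mem_iUnion.2 ⟨k, (le_div_iff₀ hD).1 h1, (div_lt_iff₀ hD).1 h2⟩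
  have hterm : ∀ k : ℕ,
      ∫⁻ y in A k, ENNReal.ofReal (dist y z ^ (-((n:ℝ) + η))) * (‖φ₁ y‖₊ : ℝ≥0∞) ∂volume
        ≤ ENNReal.ofReal (4^n * D^(-η)) * ENNReal.ofReal ((2:ℝ)^(-η))^k * M := by
    intro k
    have hk2 : (0:ℝ) < 2^k * D := by positivity
    have hrk : (0:ℝ) < 2^(k+1) * D := by positivity
    have step1 : ∫⁻ y in A k, ENNReal.ofReal (dist y z ^ (-((n:ℝ) + η))) * (‖φ₁ y‖₊ : ℝ≥0∞) ∂volume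
        ≤ ENNReal.ofReal (((2:ℝ)^k * D) ^ (-((n:ℝ) + η))) *
            ∫⁻ y in A k, (‖φ₁ y‖₊ : ℝ≥0∞) ∂volume := by
      rw [← lintegral_const_mul' _ _ ENNReal.ofReal_ne_top]
      refine setLIntegral_mono' (hAm k) (fun y hy => ?_)
      exact mul_le_mul_left (ENNReal.ofReal_le_ofReal
        (Real.rpow_le_rpow_of_nonpos hk2 hy.1 (neg_nonpos.2 (by positivity)))) _
    have step2 : ∫⁻ y in A k, (‖φ₁ y‖₊ : ℝ≥0∞) ∂volume
        ≤ M * ENNReal.ofReal (2 * (2^(k+1) * D)) ^ n := by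
      refine le_trans (lintegral_mono_set ?_) (maximal_ball φ₁ x z hrk ?_)
      · exact fun y hy => le_of_lt hy.2
      · refine hx.trans ?_
        have h1 : (1:ℝ) ≤ 2^(k+1) := one_le_pow₀ (by norm_num)
        nlinarith
    have hb : (0:ℝ) ≤ 2 * (2^(k+1) * D) := by positivity
    calc ∫⁻ y in A k, ENNReal.ofReal (dist y z ^ (-((n:ℝ) + η))) * (‖φ₁ y‖₊ : ℝ≥0∞) ∂volume
        ≤ ENNReal.ofReal (((2:ℝ)^k * D) ^ (-((n:ℝ) + η))) *
            (M * ENNReal.ofReal (2 * (2^(k+1) * D)) ^ n) :=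
          step1.trans (mul_le_mul_right step2 _)
      _ = ENNReal.ofReal (((2:ℝ)^k * D) ^ (-((n:ℝ) + η)) * (2 * (2^(k+1) * D))^n) * M := by
          rw [ENNReal.ofReal_mul (p := ((2:ℝ)^k * D) ^ (-((n:ℝ) + η))) (by positivity),
              ENNReal.ofReal_pow hb]
          ring
      _ = ENNReal.ofReal (4^n * D^(-η) * ((2:ℝ)^(-η))^k) * M := by
          congr 2
          have : 2 * ((2:ℝ)^(k+1) * D) = 2^(k+2) * D := by ring
          rw [this]
          exact ck_eq n k hD
      _ = ENNReal.ofReal (4^n * D^(-η)) * ENNReal.ofReal ((2:ℝ)^(-η))^k * M := by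
          rw [ENNReal.ofReal_mul (by positivity), ENNReal.ofReal_pow (by positivity)]
  have h2η1 : (2:ℝ)^(-η) < 1 :=
    Real.rpow_lt_one_of_one_lt_of_neg (by norm_num) (by linarith)
  have h2η0 : (0:ℝ) < 2^(-η) := Real.rpow_pos_of_pos (by norm_num) _
  calc ∫⁻ y in E, ENNReal.ofReal (dist y z ^ (-((n:ℝ) + η))) * (‖φ₁ y‖₊ : ℝ≥0∞) ∂volume
      ≤ ∫⁻ y in ⋃ k, A k, ENNReal.ofReal (dist y z ^ (-((n:ℝ) + η))) * (‖φ₁ y‖₊ : ℝ≥0∞) ∂volume :=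
        lintegral_mono_set hEsub
    _ ≤ ∑' k, ∫⁻ y in A k, ENNReal.ofReal (dist y z ^ (-((n:ℝ) + η))) * (‖φ₁ y‖₊ : ℝ≥0∞) ∂volume :=
        lintegral_iUnion_le _ _
    _ ≤ ∑' k, ENNReal.ofReal (4^n * D^(-η)) * ENNReal.ofReal ((2:ℝ)^(-η))^k * M :=
        ENNReal.tsum_le_tsum hterm
    _ = ENNReal.ofReal (4^n * D^(-η)) * (∑' k, ENNReal.ofReal ((2:ℝ)^(-η))^k) * M := by
        rw [ENNReal.tsum_mul_right, ENNReal.tsum_mul_left]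
    _ = ENNReal.ofReal (4^n * D^(-η)) * ENNReal.ofReal ((1 - 2^(-η))⁻¹) * M := by
        rw [ENNReal.tsum_geometric, ← ENNReal.ofReal_one,
            ← ENNReal.ofReal_sub _ h2η0.le, ENNReal.ofReal_inv_of_pos (by linarith)]
    _ = ENNReal.ofReal (4^n * (1 - 2^(-η))⁻¹ * D^(-η)) * M := by
        rw [← ENNReal.ofReal_mul (by positivity)]
        congr 2
        ring

lemma dist_center_le {Q : Cube n} {x : Fin n → ℝ} (hx : x ∈ Q.set) :
    dist x Q.center ≤ Q.l / 2 := by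
  rw [dist_pi_le_iff (by linarith [Q.l_pos])]
  intro i
  obtain ⟨h1, h2⟩ := hx
  have ha := h1 i
  have hb := h2 i
  rw [Real.dist_eq, abs_le, Cube.center]
  constructor <;> simp only [] at * <;> linarith

end MeanzeroAux

open MeanzeroAux

/-- **Mean-zero off-diagonal kernel estimate with maximal function control.** -/
theorem meanzero_offdiagonal_maximal
    (n : ℕ) (hn : 1 ≤ n) (η : ℝ) (hη : 0 < η) :
    ∃ C : ℝ, 0 < C ∧
      ∀ K : (Fin n → ℝ) → (Fin n → ℝ) → ℂ,
        Measurable (fun p : (Fin n → ℝ) × (Fin n → ℝ) => K p.1 p.2) →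
        (∀ x x' y, dist x x' < dist x y / 2 →
          ‖K x y - K x' y‖ ≤ dist x x' ^ η / dist x y ^ ((n : ℝ) + η)) →
      ∀ (Q : Cube n) (D : ℝ), 2 * Q.l ≤ D →
      ∀ E : Set (Fin n → ℝ), MeasurableSet E →
        (∀ y ∈ E, D ≤ dist y Q.center) →
      ∀ φ₁ φ₂ : (Fin n → ℝ) → ℂ,
        LocallyIntegrable φ₁ volume →
        (∀ y, y ∉ E → φ₁ y = 0) →
        (∀ x ∈ Q.set, maximalFn φ₁ x < ⊤) →
        Integrable φ₂ volume →
        (∀ x, x ∉ Q.set → φ₂ x = 0) →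
        (∫ x, φ₂ x) = 0 →
        ENNReal.ofReal ‖∫ x in Q.set, ∫ y in E, K x y * φ₁ y * φ₂ x ∂volume ∂volume‖
          ≤ ENNReal.ofReal (C * Q.l ^ η * D ^ (-η)) *
              ∫⁻ x in Q.set, maximalFn φ₁ x * (‖φ₂ x‖₊ : ℝ≥0∞) ∂volume := by
  classical
  set C₁ : ℝ := (4/3) ^ ((n:ℝ) + η) with hC₁
  set C₂ : ℝ := 4^n * (1 - 2^(-η))⁻¹ with hC₂
  have hC₁pos : 0 < C₁ := Real.rpow_pos_of_pos (by norm_num) _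
  have h2η1 : (2:ℝ)^(-η) < 1 :=
    Real.rpow_lt_one_of_one_lt_of_neg (by norm_num) (by linarith)
  have h2η0 : (0:ℝ) < 2^(-η) := Real.rpow_pos_of_pos (by norm_num) _
  have hC₂pos : 0 < C₂ :=
    mul_pos (by positivity) (inv_pos.2 (by linarith))
  refine ⟨C₁ * C₂, mul_pos hC₁pos hC₂pos, ?_⟩
  intro K hKm hK Q D hD E hEm hEdist φ₁ φ₂ hφ₁loc hφ₁supp hMfin hφ₂int hφ₂supp hφ₂mean
  have hl : 0 < Q.l := Q.l_pos
  have hD0 : 0 < D := lt_of_lt_of_le (by linarith) hD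
  set z := Q.center with hz
  have hQm : MeasurableSet Q.set := measurableSet_Icc
  set cE : ℝ≥0∞ := ENNReal.ofReal (C₁ * C₂ * Q.l ^ η * D ^ (-η)) with hcE
  have hφ₁m : AEStronglyMeasurable φ₁ (volume.restrict E) :=
    hφ₁loc.aestronglyMeasurable.restrict
  have hKy : ∀ w : Fin n → ℝ, Measurable (fun y => K w y) := fun w =>
    hKm.comp (measurable_const.prodMk measurable_id)
  -- pointwise kernel smoothness bound
  have hptw : ∀ x ∈ Q.set, ∀ y ∈ E,
      ‖K x y - K z y‖ ≤ C₁ * Q.l ^ η * dist y z ^ (-((n:ℝ) + η)) := by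
    intro x hx y hy
    have hd : D ≤ dist y z := hEdist y hy
    have hd0 : 0 < dist y z := lt_of_lt_of_le hD0 hd
    have h1 : dist x z ≤ Q.l / 2 := dist_center_le hx
    have h2 : Q.l / 2 ≤ dist y z / 4 := by linarith
    have h3 : 3 * dist y z / 4 ≤ dist x y := by
      have htri : dist y z ≤ dist y x + dist x z := dist_triangle y x z
      rw [dist_comm y x] at htri
      linarith
    have hxy0 : 0 < dist x y := by linarith
    have hcond : dist x z < dist x y / 2 := by linarith
    have hKb := hK x z y hcond
    have hnum : dist x z ^ η ≤ Q.l ^ η :=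
      Real.rpow_le_rpow dist_nonneg (by linarith) hη.le
    have hden : ((3:ℝ)/4 * dist y z) ^ ((n:ℝ) + η) ≤ dist x y ^ ((n:ℝ) + η) :=
      Real.rpow_le_rpow (by positivity) (by linarith) (by positivity)
    have hden0 : (0:ℝ) < ((3:ℝ)/4 * dist y z) ^ ((n:ℝ) + η) :=
      Real.rpow_pos_of_pos (by positivity) _
    have step : dist x z ^ η / dist x y ^ ((n:ℝ) + η)
        ≤ Q.l ^ η / (((3:ℝ)/4 * dist y z) ^ ((n:ℝ) + η)) :=
      div_le_div₀ (by positivity) hnum hden0 hden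
    refine hKb.trans (step.trans (le_of_eq ?_))
    rw [Real.mul_rpow (by norm_num) hd0.le,
        show ((3:ℝ)/4) = (4/3)⁻¹ by norm_num,
        Real.inv_rpow (by norm_num), Real.rpow_neg hd0.le]
    field_simp
    ring
  -- lintegral bound for the difference term
  have hgbound : ∀ x ∈ Q.set,
      ∫⁻ y in E, (‖(K x y - K z y) * φ₁ y‖₊ : ℝ≥0∞) ∂volume ≤ cE * maximalFn φ₁ x := by
    intro x hx
    have hxz : dist x z ≤ D / 2 := by
      have := dist_center_le hx; linarith
    have hann := annuli_bound hη φ₁ z x hD0 hxz E hEdist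
    calc ∫⁻ y in E, (‖(K x y - K z y) * φ₁ y‖₊ : ℝ≥0∞) ∂volume
        ≤ ∫⁻ y in E, ENNReal.ofReal (C₁ * Q.l ^ η) *
            (ENNReal.ofReal (dist y z ^ (-((n:ℝ) + η))) * (‖φ₁ y‖₊ : ℝ≥0∞)) ∂volume := by
          refine setLIntegral_mono' hEm (fun y hy => ?_)
          rw [nnnorm_mul, ENNReal.coe_mul, ← mul_assoc]
          refine mul_le_mul_left ?_ _
          rw [← enorm_eq_nnnorm, ← ofReal_norm, ← ENNReal.ofReal_mul (by positivity)]
          exact ENNReal.ofReal_le_ofReal ((hptw x hx y hy).trans (le_of_eq (by ring)))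
      _ = ENNReal.ofReal (C₁ * Q.l ^ η) *
            ∫⁻ y in E, ENNReal.ofReal (dist y z ^ (-((n:ℝ) + η))) * (‖φ₁ y‖₊ : ℝ≥0∞) ∂volume :=
          lintegral_const_mul' _ _ ENNReal.ofReal_ne_top
      _ ≤ ENNReal.ofReal (C₁ * Q.l ^ η) *
            (ENNReal.ofReal (4^n * (1 - 2^(-η))⁻¹ * D^(-η)) * maximalFn φ₁ x) :=
          mul_le_mul_right hann (ENNReal.ofReal (C₁ * Q.l ^ η))
      _ = cE * maximalFn φ₁ x := by
          rw [← mul_assoc, ← ENNReal.ofReal_mul (by positivity), hcE]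
          congr 2
          rw [hC₂]
          ring
  -- integrability of the difference term for each x in Q
  have hdiffInt : ∀ x ∈ Q.set,
      Integrable (fun y => (K x y - K z y) * φ₁ y) (volume.restrict E) := by
    intro x hx
    refine ⟨(((hKy x).sub (hKy z)).aestronglyMeasurable).mul hφ₁m, ?_⟩
    refine lt_of_le_of_lt (hgbound x hx) ?_
    exact ENNReal.mul_lt_top (hcE ▸ ENNReal.ofReal_lt_top) (hMfin x hx)
  set g : (Fin n → ℝ) → ℂ := fun x => ∫ y in E, (K x y - K z y) * φ₁ y ∂volume with hg
  have hgnorm : ∀ x ∈ Q.set, (‖g x‖₊ : ℝ≥0∞) ≤ cE * maximalFn φ₁ x := fun x hx =>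
    (enorm_integral_le_lintegral_enorm _).trans (hgbound x hx)
  -- trivial case: RHS lintegral infinite
  by_cases hRHS : (∫⁻ x in Q.set, maximalFn φ₁ x * (‖φ₂ x‖₊ : ℝ≥0∞) ∂volume) = ⊤
  · rw [hRHS, ENNReal.mul_top (ne_of_gt (ENNReal.ofReal_pos.2 (by positivity)))]
    exact le_top
  -- measurability of g
  have hgm : AEStronglyMeasurable g (volume.restrict Q.set) := by
    have hprod : AEStronglyMeasurable
        (fun p : (Fin n → ℝ) × (Fin n → ℝ) => (K p.1 p.2 - K z p.2) * φ₁ p.2)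
        ((volume.restrict Q.set).prod (volume.restrict E)) := by
      refine AEStronglyMeasurable.mul ?_ (hφ₁m.comp_snd)
      exact (hKm.sub ((hKy z).comp measurable_snd)).aestronglyMeasurable
    exact hprod.integral_prod_right'
  -- integrability of g * φ₂ on Q
  have hgφ₂int : Integrable (fun x => g x * φ₂ x) (volume.restrict Q.set) := by
    refine ⟨hgm.mul hφ₂int.aestronglyMeasurable.restrict, ?_⟩
    have hb : ∫⁻ x in Q.set, (‖g x * φ₂ x‖₊ : ℝ≥0∞) ∂volume
        ≤ ∫⁻ x in Q.set, cE * (maximalFn φ₁ x * (‖φ₂ x‖₊ : ℝ≥0∞)) ∂volume := by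
      refine setLIntegral_mono' hQm (fun x hx => ?_)
      rw [nnnorm_mul, ENNReal.coe_mul, ← mul_assoc]
      exact mul_le_mul_left (hgnorm x hx) _
    refine lt_of_le_of_lt hb ?_
    rw [lintegral_const_mul' _ _ ENNReal.ofReal_ne_top]
    exact ENNReal.mul_lt_top ENNReal.ofReal_lt_top (lt_top_iff_ne_top.2 hRHS)
  by_cases hint : Integrable (fun y => K z y * φ₁ y) (volume.restrict E)
  · -- main case
    have hsplit : Set.EqOn (fun x => ∫ y in E, K x y * φ₁ y * φ₂ x ∂volume)
        (fun x => (∫ y in E, K z y * φ₁ y ∂volume) * φ₂ x + g x * φ₂ x) Q.set := by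
      intro x hx
      simp only []
      rw [integral_mul_const]
      have : (∫ y in E, K x y * φ₁ y ∂volume)
          = (∫ y in E, K z y * φ₁ y ∂volume) + g x := by
        have hadd := integral_add hint (hdiffInt x hx)
        have heq : (fun y => K z y * φ₁ y + (K x y - K z y) * φ₁ y)
            = fun y => K x y * φ₁ y := by funext y; ring
        rw [heq] at hadd
        simp only [hg]
        rw [← hadd]
      rw [this, add_mul]
    have hQint : ∫ x in Q.set, φ₂ x ∂volume = 0 := by
      rw [setIntegral_eq_integral_of_forall_compl_eq_zero (fun x hx => hφ₂supp x hx)]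
      exact hφ₂mean
    have houter : (∫ x in Q.set, ∫ y in E, K x y * φ₁ y * φ₂ x ∂volume ∂volume)
        = ∫ x in Q.set, g x * φ₂ x ∂volume := by
      rw [setIntegral_congr_fun hQm hsplit,
          integral_add (hφ₂int.restrict.const_mul _) hgφ₂int,
          integral_const_mul, hQint, mul_zero, zero_add]
    rw [houter]
    calc ENNReal.ofReal ‖∫ x in Q.set, g x * φ₂ x ∂volume‖
        = (‖∫ x in Q.set, g x * φ₂ x ∂volume‖₊ : ℝ≥0∞) := ofReal_norm _
      _ ≤ ∫⁻ x in Q.set, (‖g x * φ₂ x‖₊ : ℝ≥0∞) ∂volume :=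
          enorm_integral_le_lintegral_enorm _
      _ ≤ ∫⁻ x in Q.set, cE * (maximalFn φ₁ x * (‖φ₂ x‖₊ : ℝ≥0∞)) ∂volume := by
          refine setLIntegral_mono' hQm (fun x hx => ?_)
          rw [nnnorm_mul, ENNReal.coe_mul, ← mul_assoc]
          exact mul_le_mul_left (hgnorm x hx) _
      _ = cE * ∫⁻ x in Q.set, maximalFn φ₁ x * (‖φ₂ x‖₊ : ℝ≥0∞) ∂volume :=
          lintegral_const_mul' _ _ ENNReal.ofReal_ne_top
  · -- degenerate case: inner integral vanishes identically on Q
    have hFzero : Set.EqOn (fun x => ∫ y in E, K x y * φ₁ y * φ₂ x ∂volume)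
        (fun _ => (0:ℂ)) Q.set := by
      intro x hx
      simp only []
      rw [integral_mul_const]
      have hnotint : ¬ Integrable (fun y => K x y * φ₁ y) (volume.restrict E) := by
        intro h
        apply hint
        have hsub := h.sub (hdiffInt x hx)
        exact hsub.congr (Filter.Eventually.of_forall fun y => by
          simp only [Pi.sub_apply]; ring)
      rw [integral_undef hnotint, zero_mul]
    have : (∫ x in Q.set, ∫ y in E, K x y * φ₁ y * φ₂ x ∂volume ∂volume) = 0 := by
      rw [setIntegral_congr_fun hQm hFzero, integral_zero]
    rw [this]
    simp only [norm_zero, ENNReal.ofReal_zero]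
    exact zero_le

end
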